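/- arXiv:1210.4528 — 3 statements merged into one kernel-verified Lean document; each statement's English description precedes it below -/
import Mathlib

section
/- The B^r seminorm is the largest seminorm |·|' on Dirac k-chains in ℝⁿ such that (i) |A|' ≤ ‖A‖_{B^0} (the mass norm) for all A, and (ii) |Δ_u A|' ≤ ‖u‖ ‖A‖_{B^{r-1}} for all A and u ∈ ℝⁿ, where r ≥ 1. -/
noncomputable section

open Finsupp

variable {n : ℕ} {V : Type*} [NormedAddCommGroup V] [NormedSpace ℝ V]

/-- A Dirac `k`-chain in `ℝⁿ` is a finitely supported function from points of `ℝⁿ` to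
`k`-vectors (modelled by a normed space `V`); the `k`-element `(p;α)` is `Finsupp.single p α`. -/
abbrev DiracChain (n : ℕ) (V : Type*) [NormedAddCommGroup V] [NormedSpace ℝ V] :=
  EuclideanSpace ℝ (Fin n) →₀ V

/-- Translation `T_u` of a Dirac chain through the vector `u`. -/
def translateChain (u : EuclideanSpace ℝ (Fin n)) (A : DiracChain n V) : DiracChain n V :=
  Finsupp.mapDomain (· + u) A

/-- The `j`-difference `k`-chain `Δ_{σ}(p;α)` for `σ = u₁∘⋯∘u_j`: the iterated difference
`(T_{u_1}-Id)⋯(T_{u_j}-Id)(p;α)`, written out as the alternating sum over subsets. -/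
def diffChain (p : EuclideanSpace ℝ (Fin n)) (α : V) {j : ℕ}
    (u : Fin j → EuclideanSpace ℝ (Fin n)) : DiracChain n V :=
  ∑ S : Finset (Fin j), ((-1 : ℝ) ^ (j - S.card)) •
    Finsupp.single (p + ∑ i ∈ S, u i) α

/-- The set of costs `Σᵢ ‖σᵢ‖‖αᵢ‖` of decompositions of `A` into difference chains of order
at most `r`. -/
def BnormSet (r : ℕ) (A : DiracChain n V) : Set ℝ :=
  {c | ∃ (m : ℕ) (j : Fin m → ℕ) (p : Fin m → EuclideanSpace ℝ (Fin n)) (α : Fin m → V)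
      (u : ∀ i : Fin m, Fin (j i) → EuclideanSpace ℝ (Fin n)),
    (∀ i, j i ≤ r) ∧ (A = ∑ i, diffChain (p i) (α i) (u i)) ∧
    c = ∑ i, (∏ l, ‖u i l‖) * ‖α i‖}

/-- The `B^r` seminorm of a Dirac chain: the infimum over all decompositions into difference
chains of order at most `r` of the total cost. -/
def Bnorm (r : ℕ) (A : DiracChain n V) : ℝ :=
  sInf (BnormSet r A)

/-- Evaluation of an exterior form `ω` (a function assigning to each point a linear functional
on `k`-vectors) on a Dirac chain. -/
def formEval (ω : EuclideanSpace ℝ (Fin n) → V →ₗ[ℝ] ℝ) (A : DiracChain n V) : ℝ :=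
  A.sum fun p α => ω p α

/-! Since `Δ_{u₁⋯u_j w}(p;α) = (T_w - Id) Δ_{u₁⋯u_j}(p;α)` and the cost of a difference chain is
the product of the norms of its vectors times `‖α‖`, appending `u` to a `B^{r-1}` decomposition
of `A` gives a `B^r` decomposition of `Δ_u A` of `‖u‖` times the cost. Conversely, peeling off the
last vector shows that a seminorm with (i) and (ii) is at most the cost on every difference chain
of order `≤ r`; by the triangle inequality it is at most the cost of every decomposition, hence at
most their infimum `‖A‖_{B^r}`. -/

open scoped Pointwise

theorem Finset.sum_powerset_map {α β M : Type*} [AddCommMonoid M] (f : α ↪ β) (s : Finset α)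
    (g : Finset β → M) :
    ∑ t ∈ (s.map f).powerset, g t = ∑ t ∈ s.powerset, g (t.map f) := by
  have : (s.map f).powerset = s.powerset.map (Finset.mapEmbedding f).toEmbedding := by
    ext t
    simp [Finset.subset_map_iff, eq_comm]
  rw [this, Finset.sum_map]
  rfl

lemma translateChain_single (u q : EuclideanSpace ℝ (Fin n)) (α : V) :
    translateChain u (Finsupp.single q α) = Finsupp.single (q + u) α :=
  mapDomain_single

lemma translateChain_sum {ι : Type*} (u : EuclideanSpace ℝ (Fin n)) (s : Finset ι)
    (f : ι → DiracChain n V) :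
    translateChain u (∑ i ∈ s, f i) = ∑ i ∈ s, translateChain u (f i) :=
  mapDomain_finsetSum

lemma translateChain_smul (u : EuclideanSpace ℝ (Fin n)) (c : ℝ) (A : DiracChain n V) :
    translateChain u (c • A) = c • translateChain u A :=
  mapDomain_smul c A

lemma diffChain_fin_zero (p : EuclideanSpace ℝ (Fin n)) (α : V)
    (u : Fin 0 → EuclideanSpace ℝ (Fin n)) : diffChain p α u = Finsupp.single p α := by
  simp [diffChain, Finset.univ_unique, Finset.eq_empty_of_isEmpty]

lemma diffChain_snoc (p : EuclideanSpace ℝ (Fin n)) (α : V) {j : ℕ}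
    (v : Fin j → EuclideanSpace ℝ (Fin n)) (w : EuclideanSpace ℝ (Fin n)) :
    diffChain p α (Fin.snoc v w) =
      translateChain w (diffChain p α v) - diffChain p α v := by
  classical
  have hlast : Fin.last j ∉ Finset.univ.map Fin.castSuccEmb := by simp
  have sum_snoc (T : Finset (Fin j)) :
      ∑ i ∈ T.map Fin.castSuccEmb, Fin.snoc v w i = ∑ i ∈ T, v i := by
    simp [Finset.sum_map]
  have card_le (T : Finset (Fin j)) : T.card ≤ j := (Finset.card_le_univ T).trans_eq (by simp)
  simp only [diffChain, translateChain_sum, translateChain_smul, translateChain_single]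
  rw [← Finset.powerset_univ, Fin.univ_castSuccEmb, Finset.cons_eq_insert,
    Finset.sum_powerset_insert hlast, Finset.sum_powerset_map, Finset.sum_powerset_map,
    Finset.powerset_univ, sub_eq_neg_add, ← Finset.sum_neg_distrib]
  congr 1 <;> refine Finset.sum_congr rfl fun T _ => ?_
  · rw [Finset.card_map, sum_snoc, ← neg_smul, Nat.sub_add_comm (card_le T), pow_succ,
      mul_neg_one]
  · have hT : Fin.last j ∉ T.map Fin.castSuccEmb := by simp
    rw [Finset.sum_insert hT, Finset.card_insert_of_notMem hT, Finset.card_map, sum_snoc,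
      Fin.snoc_last, Nat.add_sub_add_right, add_left_comm, add_comm w]

lemma nonneg_of_mem_BnormSet {r : ℕ} {A : DiracChain n V} {c : ℝ} (hc : c ∈ BnormSet r A) :
    0 ≤ c := by
  obtain ⟨m, j, p, α, u, -, -, rfl⟩ := hc
  positivity

lemma BnormSet_bddBelow (r : ℕ) (A : DiracChain n V) : BddBelow (BnormSet r A) :=
  ⟨0, fun _ => nonneg_of_mem_BnormSet⟩

lemma BnormSet_mono {r s : ℕ} (hrs : r ≤ s) (A : DiracChain n V) :
    BnormSet r A ⊆ BnormSet s A := by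
  rintro c ⟨m, j, p, α, u, hj, hA, hc⟩
  exact ⟨m, j, p, α, u, fun i => (hj i).trans hrs, hA, hc⟩

lemma BnormSet_nonempty (r : ℕ) (A : DiracChain n V) : (BnormSet r A).Nonempty := by
  set e := A.support.equivFin.symm
  refine ⟨_, A.support.card, fun _ => 0, fun i => e i, fun i => A (e i), fun _ => Fin.elim0,
    fun _ => Nat.zero_le r, ?_, rfl⟩
  simp only [diffChain_fin_zero]
  rw [Equiv.sum_comp e (fun q => Finsupp.single (q : EuclideanSpace ℝ (Fin n)) (A q)),
    Finset.sum_coe_sort A.support (fun q => Finsupp.single q (A q))]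
  exact (sum_single A).symm

lemma Bnorm_le_of_mem_BnormSet {r : ℕ} {A : DiracChain n V} {c : ℝ} (hc : c ∈ BnormSet r A) :
    Bnorm r A ≤ c :=
  csInf_le (BnormSet_bddBelow r A) hc

lemma Bnorm_le_Bnorm_of_le {r s : ℕ} (hrs : r ≤ s) (A : DiracChain n V) : Bnorm s A ≤ Bnorm r A :=
  csInf_le_csInf (BnormSet_bddBelow s A) (BnormSet_nonempty r A) (BnormSet_mono hrs A)

lemma Bnorm_diffChain_le {r j : ℕ} (hj : j ≤ r) (p : EuclideanSpace ℝ (Fin n)) (α : V)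
    (u : Fin j → EuclideanSpace ℝ (Fin n)) :
    Bnorm r (diffChain p α u) ≤ (∏ l, ‖u l‖) * ‖α‖ :=
  Bnorm_le_of_mem_BnormSet ⟨1, fun _ => j, fun _ => p, fun _ => α, fun _ => u, fun _ => hj,
    by simp, by simp⟩

lemma mul_mem_BnormSet_translateChain_sub {r : ℕ} {A : DiracChain n V} {c : ℝ}
    (hc : c ∈ BnormSet r A) (u : EuclideanSpace ℝ (Fin n)) :
    ‖u‖ * c ∈ BnormSet (r + 1) (translateChain u A - A) := by
  obtain ⟨m, j, p, α, w, hj, rfl, rfl⟩ := hc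
  refine ⟨m, fun i => j i + 1, p, α, fun i => Fin.snoc (w i) u,
    fun i => Nat.succ_le_succ (hj i), ?_, ?_⟩
  · simp only [diffChain_snoc, translateChain_sum, Finset.sum_sub_distrib]
  · simp only [Finset.mul_sum, Fin.prod_univ_castSucc, Fin.snoc_castSucc, Fin.snoc_last]
    exact Finset.sum_congr rfl fun i _ => by ring

lemma Bnorm_translateChain_sub_le (r : ℕ) (A : DiracChain n V) (u : EuclideanSpace ℝ (Fin n)) :
    Bnorm (r + 1) (translateChain u A - A) ≤ ‖u‖ * Bnorm r A := by
  rw [Bnorm, Bnorm, ← smul_eq_mul, ← Real.sInf_smul_of_nonneg (norm_nonneg u)]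
  refine le_csInf ((BnormSet_nonempty r A).smul_set) ?_
  rintro _ ⟨c, hc, rfl⟩
  exact Bnorm_le_of_mem_BnormSet (mul_mem_BnormSet_translateChain_sub hc u)

lemma Seminorm.apply_diffChain_le {r j : ℕ} (N : Seminorm ℝ (DiracChain n V))
    (h0 : ∀ A : DiracChain n V, N A ≤ Bnorm 0 A)
    (h1 : ∀ (A : DiracChain n V) (u : EuclideanSpace ℝ (Fin n)),
      N (translateChain u A - A) ≤ ‖u‖ * Bnorm r A)
    (hj : j ≤ r + 1) (p : EuclideanSpace ℝ (Fin n)) (α : V)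
    (u : Fin j → EuclideanSpace ℝ (Fin n)) :
    N (diffChain p α u) ≤ (∏ l, ‖u l‖) * ‖α‖ := by
  cases j with
  | zero => exact (h0 _).trans (Bnorm_diffChain_le le_rfl p α u)
  | succ k =>
    rw [← Fin.snoc_init_self u, diffChain_snoc, Fin.prod_univ_castSucc]
    calc N _ ≤ ‖u (Fin.last k)‖ * Bnorm r (diffChain p α (Fin.init u)) := h1 _ _
      _ ≤ ‖u (Fin.last k)‖ * ((∏ l, ‖Fin.init u l‖) * ‖α‖) := by
          gcongr
          exact Bnorm_diffChain_le (by omega) p α _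
      _ = _ := by simp only [Fin.snoc_castSucc, Fin.snoc_last, Fin.init]; ring

lemma Seminorm.le_Bnorm_of_diffChain_le {r : ℕ} (N : Seminorm ℝ (DiracChain n V))
    (hN : ∀ (j : ℕ), j ≤ r → ∀ (p : EuclideanSpace ℝ (Fin n)) (α : V)
      (u : Fin j → EuclideanSpace ℝ (Fin n)), N (diffChain p α u) ≤ (∏ l, ‖u l‖) * ‖α‖)
    (A : DiracChain n V) : N A ≤ Bnorm r A := by
  refine le_csInf (BnormSet_nonempty r A) ?_
  rintro _ ⟨m, j, p, α, u, hj, rfl, rfl⟩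
  exact (Finset.le_sum_of_subadditive N (map_zero N).le (map_add_le_add N) _ _).trans
    (Finset.sum_le_sum fun i _ => hN (j i) (hj i) (p i) (α i) (u i))

/-- for `r ≥ 1`, the `B^r` seminorm is the largest seminorm `|·|'` on Dirac
chains such that (i) `|A|' ≤ ‖A‖_{B^0}` (the mass norm) and (ii)
`|Δ_u A|' ≤ ‖u‖·‖A‖_{B^{r-1}}`: it satisfies both properties, and any seminorm satisfying
them is dominated by it. -/
theorem Bnorm_largest_seminorm' (n r : ℕ) (hr : 1 ≤ r) {V : Type*} [NormedAddCommGroup V]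
    [NormedSpace ℝ V] :
    ((∀ A : DiracChain n V, Bnorm r A ≤ Bnorm 0 A) ∧
      (∀ (A : DiracChain n V) (u : EuclideanSpace ℝ (Fin n)),
        Bnorm r (translateChain u A - A) ≤ ‖u‖ * Bnorm (r - 1) A)) ∧
    (∀ N : Seminorm ℝ (DiracChain n V),
      (∀ A : DiracChain n V, N A ≤ Bnorm 0 A) →
      (∀ (A : DiracChain n V) (u : EuclideanSpace ℝ (Fin n)),
        N (translateChain u A - A) ≤ ‖u‖ * Bnorm (r - 1) A) →
      ∀ A : DiracChain n V, N A ≤ Bnorm r A) := by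
  obtain ⟨r, rfl⟩ : ∃ s, r = s + 1 := ⟨r - 1, by omega⟩
  rw [Nat.add_sub_cancel]
  exact ⟨⟨Bnorm_le_Bnorm_of_le (Nat.zero_le _), Bnorm_translateChain_sub_le r⟩,
    fun N h0 h1 => N.le_Bnorm_of_diffChain_le fun _ hj => N.apply_diffChain_le h0 h1 hj⟩

end
end

section
/- Let E_n ⊂ [0,1] be the n-th stage of the middle-third Cantor construction (union of 2ⁿ closed intervals of length 3⁻ⁿ), and let μ_n be the measure (3/2)ⁿ · (Lebesgue measure restricted to E_n). Then for every Lipschitz function f : [0,1] → ℝ, the integrals ∫ f dμ_n converge as n → ∞, and in fact |∫ f dμ_n − ∫ f dμ_{n+1}| ≤ C·Lip(f)·3⁻ⁿ for a universal constant C; consequently (μ_n) converges weakly to the standard Cantor measure. -/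
/-!
Put `A f y = (f (y / 3) + f (y / 3 + 2 / 3)) / 2`. Since `E_{n+1}` consists of two disjoint copies
of `E_n` scaled by `1/3`, `∫ f dμ_{n+1} = ∫ A f dμ_n`, so `∫ f dμ_n = ∫ Aⁿ f dμ_0` and
`∫ f dμ_{n+1} = ∫ Aⁿ f dμ_1`. The operator `A` divides Lipschitz constants by `3`, and the
integrals of a `K`-Lipschitz function against two probability measures carried by `[0,1]` differ by
at most `K`; this gives the `3⁻ⁿ` bound and hence convergence for Lipschitz `f`.
By Prokhorov, the probability measures carried by `[0,1]` form a compact set, so `(μ_n)` has a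
cluster point `μ`. Its integrals of bounded Lipschitz functions are the limits above, and these
functions detect weak convergence, so `μ_n → μ`; by Tietze extension, integrals of any continuous
function converge as well, since it agrees on `[0,1]` with a bounded one.
-/

open MeasureTheory Filter Topology

noncomputable section

/-- The `n`-th stage `E_n ⊆ [0,1]` of the middle-third Cantor construction: `E_0 = [0,1]` and
`E_{n+1}` is the union of the two affine images of `E_n` scaled by `1/3` into the outer
thirds (equivalently, `E_n` with the open middle third of each component removed). -/
def cantorStage : ℕ → Set ℝ
  | 0 => Set.Icc 0 1
  | n + 1 => (fun x => x / 3) '' cantorStage n ∪ (fun x => x / 3 + 2 / 3) '' cantorStage n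

/-- The renormalized measure `μ_n := (3/2)ⁿ · Leb|_{E_n}`. -/
def cantorApprox (n : ℕ) : Measure ℝ :=
  ((3 / 2 : ENNReal)) ^ n • volume.restrict (cantorStage n)

open Set Metric
open scoped NNReal BoundedContinuousFunction

section LipschitzIntegral

variable {Ω : Type*} [PseudoMetricSpace Ω] [MeasurableSpace Ω] [OpensMeasurableSpace Ω]
  {μ ν : Measure Ω} [IsProbabilityMeasure μ] [IsProbabilityMeasure ν]
  {f : Ω → ℝ} {K : ℝ≥0} {c : Ω} {r : ℝ}

lemma LipschitzWith.abs_integral_sub_le (hf : LipschitzWith K f)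
    (hμ : ∀ᵐ x ∂μ, x ∈ closedBall c r) : |∫ x, f x ∂μ - f c| ≤ K * r := by
  have hbound : ∀ᵐ x ∂μ, ‖f x - f c‖ ≤ K * r := by
    filter_upwards [hμ] with x hx
    exact hf.dist_le_mul_of_le hx
  have hintegrable : Integrable f μ := by
    simpa using (Integrable.of_bound (hf.continuous.sub continuous_const).aestronglyMeasurable _
      hbound).add (integrable_const (f c))
  have hmean : ∫ x, f x ∂μ - f c = ∫ x, (f x - f c) ∂μ := by
    simp [integral_sub hintegrable (integrable_const _)]
  simpa [hmean] using norm_integral_le_of_norm_le_const hbound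

lemma LipschitzWith.abs_integral_sub_integral_le (hf : LipschitzWith K f)
    (hμ : ∀ᵐ x ∂μ, x ∈ closedBall c r) (hν : ∀ᵐ x ∂ν, x ∈ closedBall c r) :
    |∫ x, f x ∂μ - ∫ x, f x ∂ν| ≤ 2 * K * r := by
  have h₁ := hf.abs_integral_sub_le hμ
  have h₂ := hf.abs_integral_sub_le hν
  calc |∫ x, f x ∂μ - ∫ x, f x ∂ν| = |(∫ x, f x ∂μ - f c) - (∫ x, f x ∂ν - f c)| := by ring_nf
    _ ≤ |∫ x, f x ∂μ - f c| + |∫ x, f x ∂ν - f c| := abs_sub _ _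
    _ ≤ 2 * K * r := by linarith

end LipschitzIntegral

namespace MeasureTheory.ProbabilityMeasure

variable {Ω : Type*} [MetricSpace Ω] [MeasurableSpace Ω] [BorelSpace Ω] {K : Set Ω}

theorem exists_tendsto_of_forall_lipschitz_tendsto_integral {μs : ℕ → ProbabilityMeasure Ω}
    (hK : IsCompact K) (hμsK : ∀ n, ∀ᵐ x ∂(μs n : Measure Ω), x ∈ K)
    (hμs : ∀ f : Ω → ℝ, (∃ C, ∀ x y, dist (f x) (f y) ≤ C) → (∃ L, LipschitzWith L f) →
      ∃ l, Tendsto (fun n => ∫ x, f x ∂(μs n : Measure Ω)) atTop (𝓝 l)) :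
    ∃ μ : ProbabilityMeasure Ω, (∀ᵐ x ∂(μ : Measure Ω), x ∈ K) ∧ Tendsto μs atTop (𝓝 μ) := by
  -- Prokhorov's criterion, with the constant compact sets `K` and the constant bounds `0`
  have hcompact : IsCompact {μ : ProbabilityMeasure Ω | ∀ _ : ℕ, μ Kᶜ ≤ 0} :=
    isCompact_setOfPred_probabilityMeasure_mass_eq_compl_isCompact_le tendsto_const_nhds
      (fun _ => hK) (.inr monotone_const)
  obtain ⟨μ, hμK, hμ⟩ := hcompact.exists_mapClusterPt (f := atTop) (u := μs) <|
    tendsto_principal.2 (.of_forall fun n _ =>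
      ((null_iff_toMeasure_null _ _).2 (ae_iff.1 (hμsK n))).le)
  refine ⟨μ, ae_iff.2 ((null_iff_toMeasure_null _ _).1 (le_zero_iff.1 (hμK 0))), ?_⟩
  rw [tendsto_iff_forall_lipschitz_integral_tendsto]
  rintro f ⟨C, hC⟩ ⟨L, hf⟩
  obtain ⟨l, hl⟩ := hμs f ⟨C, hC⟩ ⟨L, hf⟩
  let g : Ω →ᵇ ℝ := .mkOfBound ⟨f, hf.continuous⟩ C hC
  have hcluster := hμ.tendsto_comp (continuous_integral_boundedContinuousFunction g).continuousAt
  have hlim : ∫ x, f x ∂(μ : Measure Ω) = l :=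
    eq_of_nhds_neBot (hcluster.neBot.mono (inf_le_inf_left _ hl))
  rwa [hlim]

theorem tendsto_integral_of_continuousOn {ι : Type*} {l : Filter ι} {μs : ι → ProbabilityMeasure Ω}
    {μ : ProbabilityMeasure Ω} (hμs : Tendsto μs l (𝓝 μ)) (hK : IsCompact K)
    (hμsK : ∀ i, ∀ᵐ x ∂(μs i : Measure Ω), x ∈ K) (hμK : ∀ᵐ x ∂(μ : Measure Ω), x ∈ K)
    {f : Ω → ℝ} (hf : ContinuousOn f K) :
    Tendsto (fun i => ∫ x, f x ∂(μs i : Measure Ω)) l (𝓝 (∫ x, f x ∂(μ : Measure Ω))) := by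
  have : CompactSpace K := isCompact_iff_compactSpace.mp hK
  obtain ⟨g, -, hg⟩ := BoundedContinuousFunction.exists_norm_eq_domRestrict_eq_of_closed
    (.mkOfCompact ⟨K.domRestrict f, hf.domRestrict⟩) hK.isClosed
  have hgf : ∀ x ∈ K, g x = f x := fun x hx => DFunLike.congr_fun hg ⟨x, hx⟩
  have hintegral : ∀ ν : Measure Ω, (∀ᵐ x ∂ν, x ∈ K) → ∫ x, f x ∂ν = ∫ x, g x ∂ν := fun ν hν =>
    integral_congr_ae (hν.mono fun x hx => (hgf x hx).symm)
  rw [hintegral _ hμK]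
  simp_rw [hintegral _ (hμsK _)]
  exact tendsto_iff_forall_integral_tendsto.1 hμs g

end MeasureTheory.ProbabilityMeasure

lemma isCompact_cantorStage (n : ℕ) : IsCompact (cantorStage n) := by
  induction n with
  | zero => exact isCompact_Icc
  | succ n ih => exact (ih.image (by fun_prop)).union (ih.image (by fun_prop))

lemma cantorStage_subset_Icc (n : ℕ) : cantorStage n ⊆ Icc 0 1 := by
  induction n with
  | zero => exact subset_rfl
  | succ n ih =>
    rintro _ (⟨x, hx, rfl⟩ | ⟨x, hx, rfl⟩) <;> obtain ⟨h₀, h₁⟩ := ih hx <;>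
      constructor <;> linarith

lemma disjoint_cantorStage_thirds (n : ℕ) :
    Disjoint ((fun x : ℝ => x / 3) '' cantorStage n)
      ((fun x : ℝ => x / 3 + 2 / 3) '' cantorStage n) := by
  rintro s hs₀ hs₂ y hy
  obtain ⟨x₀, hx₀, rfl⟩ := hs₀ hy
  obtain ⟨x₂, hx₂, hx⟩ := hs₂ hy
  have := (cantorStage_subset_Icc n hx₀).2
  have := (cantorStage_subset_Icc n hx₂).1
  simp only at hx
  linarith

def cantorAverage (f : ℝ → ℝ) (y : ℝ) : ℝ := (f (y / 3) + f (y / 3 + 2 / 3)) / 2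

lemma continuous_cantorAverage {f : ℝ → ℝ} (hf : Continuous f) : Continuous (cantorAverage f) := by
  unfold cantorAverage; fun_prop

lemma lipschitzWith_cantorAverage {f : ℝ → ℝ} {K : ℝ≥0} (hf : LipschitzWith K f) :
    LipschitzWith (K / 3) (cantorAverage f) := by
  have hdist : ∀ c x y : ℝ, dist (x / 3 + c) (y / 3 + c) = dist x y / 3 := fun c x y => by
    rw [dist_add_right, Real.dist_eq, Real.dist_eq, ← sub_div, abs_div]
    norm_num
  have hdist₀ : ∀ x y : ℝ, dist (x / 3) (y / 3) = dist x y / 3 := by simpa using hdist 0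
  refine .of_dist_le_mul fun x y => ?_
  calc dist (cantorAverage f x) (cantorAverage f y)
      = dist (f (x / 3) + f (x / 3 + 2 / 3)) (f (y / 3) + f (y / 3 + 2 / 3)) / 2 := by
        rw [cantorAverage, cantorAverage, Real.dist_eq, Real.dist_eq, ← sub_div, abs_div, abs_two]
    _ ≤ (dist (f (x / 3)) (f (y / 3)) + dist (f (x / 3 + 2 / 3)) (f (y / 3 + 2 / 3))) / 2 := by
        gcongr; exact dist_add_add_le _ _ _ _
    _ ≤ (K * dist (x / 3) (y / 3) + K * dist (x / 3 + 2 / 3) (y / 3 + 2 / 3)) / 2 := by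
        gcongr <;> exact hf.dist_le_mul _ _
    _ = ↑(K / 3) * dist x y := by rw [hdist₀, hdist, NNReal.coe_div]; push_cast; ring

lemma integral_cantorApprox (n : ℕ) (f : ℝ → ℝ) :
    ∫ x, f x ∂cantorApprox n = (3 / 2 : ℝ) ^ n * ∫ x in cantorStage n, f x := by
  rw [cantorApprox, integral_smul_measure, smul_eq_mul, ENNReal.toReal_pow, ENNReal.toReal_div]
  norm_num

lemma setIntegral_image_div_three_add (c : ℝ) {s : Set ℝ} (hs : MeasurableSet s) (f : ℝ → ℝ) :
    ∫ x in (fun x => x / 3 + c) '' s, f x = 3⁻¹ * ∫ x in s, f (x / 3 + c) := by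
  have hderiv : ∀ x ∈ s, HasDerivWithinAt (fun x => x / 3 + c) 3⁻¹ s x := fun x _ => by
    simpa [div_eq_mul_inv] using (((hasDerivAt_id x).div_const 3).add_const c).hasDerivWithinAt
  have hinj : InjOn (fun x : ℝ => x / 3 + c) s := fun x _ y _ h => by simpa using h
  rw [integral_image_eq_integral_abs_deriv_smul hs hderiv hinj, abs_of_pos (by norm_num),
    integral_smul, smul_eq_mul]

lemma setIntegral_cantorStage_succ {f : ℝ → ℝ} (hf : Continuous f) (n : ℕ) :
    ∫ x in cantorStage (n + 1), f x = 2 / 3 * ∫ x in cantorStage n, cantorAverage f x := by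
  have hE := isCompact_cantorStage n
  have hleft := setIntegral_image_div_three_add 0 hE.measurableSet f
  simp only [add_zero] at hleft
  have hintegrable : ∀ {g : ℝ → ℝ} {s : Set ℝ}, Continuous g → IsCompact s → IntegrableOn g s :=
    fun hg hs => hg.continuousOn.integrableOn_compact hs
  rw [cantorStage, setIntegral_union (disjoint_cantorStage_thirds n)
      (hE.image (by fun_prop)).measurableSet (hintegrable hf (hE.image (by fun_prop)))
      (hintegrable hf (hE.image (by fun_prop))),
    hleft, setIntegral_image_div_three_add _ hE.measurableSet]
  simp only [cantorAverage]
  rw [integral_div, integral_add (hintegrable (by fun_prop) hE) (hintegrable (by fun_prop) hE)]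
  ring

lemma integral_cantorApprox_succ {f : ℝ → ℝ} (hf : Continuous f) (n : ℕ) :
    ∫ x, f x ∂cantorApprox (n + 1) = ∫ x, cantorAverage f x ∂cantorApprox n := by
  rw [integral_cantorApprox, integral_cantorApprox, setIntegral_cantorStage_succ hf, pow_succ]
  ring

lemma integral_cantorApprox_add {f : ℝ → ℝ} (hf : Continuous f) (m n : ℕ) :
    ∫ x, f x ∂cantorApprox (m + n) = ∫ x, cantorAverage^[n] f x ∂cantorApprox m := by
  induction n generalizing f with
  | zero => rfl
  | succ n ih =>
    rw [← add_assoc, integral_cantorApprox_succ hf, ih (continuous_cantorAverage hf),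
      Function.iterate_succ_apply]

lemma cantorApprox_real_univ (n : ℕ) : (cantorApprox n).real univ = 1 := by
  have h := integral_cantorApprox_add (continuous_const (y := (1 : ℝ))) 0 n
  have hconst : ∀ k, cantorAverage^[k] (fun _ => (1 : ℝ)) = fun _ => 1 := fun k =>
    Function.iterate_fixed (by ext; norm_num [cantorAverage]) k
  simpa [hconst, cantorApprox, cantorStage] using h

instance isProbabilityMeasure_cantorApprox (n : ℕ) : IsProbabilityMeasure (cantorApprox n) :=
  ⟨(ENNReal.toReal_eq_one_iff _).1 (cantorApprox_real_univ n)⟩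

lemma ae_cantorApprox_mem_closedBall (n : ℕ) :
    ∀ᵐ x ∂cantorApprox n, x ∈ closedBall (1 / 2 : ℝ) (1 / 2) := by
  have hball : closedBall (1 / 2 : ℝ) (1 / 2) = Icc 0 1 := by
    rw [Real.closedBall_eq_Icc]; norm_num
  refine Measure.ae_smul_measure ?_ _
  filter_upwards [ae_restrict_mem (isCompact_cantorStage n).measurableSet] with x hx
  exact hball ▸ cantorStage_subset_Icc n hx

lemma abs_integral_cantorApprox_sub_succ_le {f : ℝ → ℝ} {K : ℝ≥0} (hf : LipschitzWith K f)
    (n : ℕ) : |∫ x, f x ∂cantorApprox n - ∫ x, f x ∂cantorApprox (n + 1)| ≤ K * 3⁻¹ ^ n := by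
  have hlip : LipschitzWith (K / 3 ^ n) (cantorAverage^[n] f) := by
    induction n with
    | zero => simpa using hf
    | succ n ih =>
      rw [Function.iterate_succ_apply']
      simpa [pow_succ, div_div] using lipschitzWith_cantorAverage ih
  have hμ₀ := integral_cantorApprox_add hf.continuous 0 n
  have hμ₁ := integral_cantorApprox_add hf.continuous 1 n
  rw [zero_add] at hμ₀
  rw [add_comm] at hμ₁
  rw [hμ₀, hμ₁]
  calc _ ≤ 2 * ↑(K / 3 ^ n) * (1 / 2) := hlip.abs_integral_sub_integral_le
        (ae_cantorApprox_mem_closedBall 0) (ae_cantorApprox_mem_closedBall 1)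
    _ = K * (3 : ℝ)⁻¹ ^ n := by push_cast; rw [inv_pow]; ring

lemma exists_tendsto_integral_cantorApprox {f : ℝ → ℝ} {K : ℝ≥0} (hf : LipschitzWith K f) :
    ∃ l, Tendsto (fun n => ∫ x, f x ∂cantorApprox n) atTop (𝓝 l) :=
  cauchySeq_tendsto_of_complete <| cauchySeq_of_le_geometric 3⁻¹ K (by norm_num) fun n =>
    (Real.dist_eq _ _).trans_le (abs_integral_cantorApprox_sub_succ_le hf n)

/-- for every Lipschitz `f : [0,1] → ℝ` the integrals `∫ f dμ_n` converge as
`n → ∞`; in fact `|∫ f dμ_n − ∫ f dμ_{n+1}| ≤ C·Lip(f)·3⁻ⁿ` for a universal constant `C`;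
consequently `(μ_n)` converges weakly to a (probability) measure, the standard Cantor
measure. -/
theorem cantorApprox_converges :
    (∃ C : ℝ, ∀ (n : ℕ) (f : ℝ → ℝ) (K : NNReal), LipschitzWith K f →
      |(∫ x, f x ∂cantorApprox n) - ∫ x, f x ∂cantorApprox (n + 1)| ≤
        C * K * (3 : ℝ)⁻¹ ^ n) ∧
    (∀ (f : ℝ → ℝ) (K : NNReal), LipschitzWith K f →
      ∃ L : ℝ, Tendsto (fun n => ∫ x, f x ∂cantorApprox n) atTop (𝓝 L)) ∧
    (∃ μ : Measure ℝ, IsProbabilityMeasure μ ∧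
      ∀ f : ℝ → ℝ, Continuous f →
        Tendsto (fun n => ∫ x, f x ∂cantorApprox n) atTop (𝓝 (∫ x, f x ∂μ))) := by
  refine ⟨⟨1, fun n f K hf => by simpa using abs_integral_cantorApprox_sub_succ_le hf n⟩,
    fun f K hf => exists_tendsto_integral_cantorApprox hf, ?_⟩
  have hK : IsCompact (closedBall (1 / 2 : ℝ) (1 / 2)) := isCompact_closedBall _ _
  obtain ⟨μ, hμK, hμ⟩ := ProbabilityMeasure.exists_tendsto_of_forall_lipschitz_tendsto_integral
    (μs := fun n => ⟨cantorApprox n, inferInstance⟩) hK ae_cantorApprox_mem_closedBall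
    fun f _ ⟨_, hf⟩ => exists_tendsto_integral_cantorApprox hf
  exact ⟨μ, inferInstance, fun f hf => ProbabilityMeasure.tendsto_integral_of_continuousOn hμ hK
    ae_cantorApprox_mem_closedBall hμK hf.continuousOn⟩
end
end

section
/- For open sets U₁ ⊆ ℝⁿ and U₂ ⊆ ℝᵐ, the Cartesian wedge product of Dirac chains, defined on k- and ℓ-elements by (p;α) ×̂ (q;β) := ((p,q); ι₁*α ∧ ι₂*β) where ι₁, ι₂ are the inclusions of ℝⁿ and ℝᵐ into ℝⁿ⁺ᵐ, satisfies: if P ×̂ Q = 0 for Dirac chains P ∈ A_k(U₁), Q ∈ A_ℓ(U₂), then P = 0 or Q = 0. -/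
/-! The coefficient of `P ×̂ Q` at `(p, q)` is `ι₁*(P p) ∧ ι₂*(Q q)`. Since the exterior algebra of
`M × N` is the graded tensor product of those of `M` and `N` (a special case of the Clifford algebra
of an orthogonal sum), this product is the pure tensor `P p ⊗ Q q`, and over a field a pure tensor
vanishes only when one of its factors does. -/

open ExteriorAlgebra

noncomputable section

variable (n m : ℕ)

/-- The submodule of `k`-vectors in the exterior algebra of a module: the span of the simple
`k`-fold wedge products. -/
def kVectors (M : Type*) [AddCommGroup M] [Module ℝ M] (k : ℕ) :
    Submodule ℝ (ExteriorAlgebra ℝ M) :=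
  Submodule.span ℝ {x | ∃ u : Fin k → M, x = ExteriorAlgebra.ιMulti ℝ k u}

/-- The Cartesian wedge product of Dirac chains: on elements,
`(p;α) ×̂ (q;β) := ((p,q); ι₁*α ∧ ι₂*β)`, extended bilinearly, where `ι₁, ι₂` are the
inclusions of `ℝⁿ` and `ℝᵐ` into `ℝⁿ⁺ᵐ = ℝⁿ × ℝᵐ`. -/
def cwedge
    (P : EuclideanSpace ℝ (Fin n) →₀ ExteriorAlgebra ℝ (EuclideanSpace ℝ (Fin n)))
    (Q : EuclideanSpace ℝ (Fin m) →₀ ExteriorAlgebra ℝ (EuclideanSpace ℝ (Fin m))) :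
    (EuclideanSpace ℝ (Fin n) × EuclideanSpace ℝ (Fin m)) →₀
      ExteriorAlgebra ℝ (EuclideanSpace ℝ (Fin n) × EuclideanSpace ℝ (Fin m)) :=
  P.sum fun p α => Q.sum fun q β =>
    Finsupp.single (p, q)
      (ExteriorAlgebra.map (LinearMap.inl ℝ (EuclideanSpace ℝ (Fin n))
          (EuclideanSpace ℝ (Fin m))) α *
        ExteriorAlgebra.map (LinearMap.inr ℝ (EuclideanSpace ℝ (Fin n))
          (EuclideanSpace ℝ (Fin m))) β)

open scoped TensorProduct

theorem TensorProduct.eq_zero_or_eq_zero_of_tmul_eq_zero {K A B : Type*} [Field K]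
    [AddCommGroup A] [Module K A] [AddCommGroup B] [Module K B] {a : A} {b : B}
    (h : a ⊗ₜ[K] b = 0) : a = 0 ∨ b = 0 := by
  refine or_iff_not_imp_left.mpr fun ha => ?_
  obtain ⟨φ, hφ⟩ := Module.Projective.exists_dual_eq_one K ha
  simpa [hφ] using congr(TensorProduct.lid K B (TensorProduct.map φ LinearMap.id $h))

theorem CliffordAlgebra.eq_zero_or_eq_zero_of_map_inl_mul_map_inr_eq_zero {K M₁ M₂ : Type*}
    [Field K] [AddCommGroup M₁] [Module K M₁] [AddCommGroup M₂] [Module K M₂]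
    {Q₁ : QuadraticForm K M₁} {Q₂ : QuadraticForm K M₂}
    {a : CliffordAlgebra Q₁} {b : CliffordAlgebra Q₂}
    (h : map (QuadraticMap.Isometry.inl Q₁ Q₂) a * map (QuadraticMap.Isometry.inr Q₁ Q₂) b = 0) :
    a = 0 ∨ b = 0 := by
  have hgraded : (a ᵍ⊗ₜ[K] b : evenOdd Q₁ ᵍ⊗[K] evenOdd Q₂) = 0 :=
    (prodEquiv Q₁ Q₂).symm.injective (by rw [map_zero]; exact h)
  exact TensorProduct.eq_zero_or_eq_zero_of_tmul_eq_zero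
    congr((GradedTensorProduct.of K (evenOdd Q₁) (evenOdd Q₂)).symm $hgraded)

theorem ExteriorAlgebra.eq_zero_or_eq_zero_of_map_inl_mul_map_inr_eq_zero {K M N : Type*}
    [Field K] [AddCommGroup M] [Module K M] [AddCommGroup N] [Module K N]
    {a : ExteriorAlgebra K M} {b : ExteriorAlgebra K N}
    (h : map (LinearMap.inl K M N) a * map (LinearMap.inr K M N) b = 0) : a = 0 ∨ b = 0 := by
  -- `ExteriorAlgebra K (M × N)` is `CliffordAlgebra 0`, and `0.prod 0 = 0` is not definitional.
  let e : (QuadraticMap.prod (0 : QuadraticForm K M) (0 : QuadraticForm K N)).IsometryEquiv 0 :=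
    { LinearEquiv.refl K (M × N) with map_app' := fun x => by simp }
  refine CliffordAlgebra.eq_zero_or_eq_zero_of_map_inl_mul_map_inr_eq_zero
    ((CliffordAlgebra.equivOfIsometry e).injective ?_)
  rw [map_mul, map_zero, ← h]
  congr 1 <;> exact DFunLike.congr_fun (CliffordAlgebra.map_comp_map _ _) _

theorem cwedge_apply
    (P : EuclideanSpace ℝ (Fin n) →₀ ExteriorAlgebra ℝ (EuclideanSpace ℝ (Fin n)))
    (Q : EuclideanSpace ℝ (Fin m) →₀ ExteriorAlgebra ℝ (EuclideanSpace ℝ (Fin m)))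
    (p : EuclideanSpace ℝ (Fin n)) (q : EuclideanSpace ℝ (Fin m)) :
    cwedge n m P Q (p, q) =
      ExteriorAlgebra.map (LinearMap.inl ℝ _ _) (P p) *
        ExteriorAlgebra.map (LinearMap.inr ℝ _ _) (Q q) := by
  simp only [cwedge, Finsupp.sum_apply, Finsupp.single_apply, Prod.mk.injEq]
  rw [Finsupp.sum_eq_single p (fun p' _ hp' => by simp [hp']) (by simp),
    Finsupp.sum_eq_single q (fun q' _ hq' => by simp [hq']) (by simp), if_pos ⟨rfl, rfl⟩]

theorem cwedge_eq_zero_iff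
    (P : EuclideanSpace ℝ (Fin n) →₀ ExteriorAlgebra ℝ (EuclideanSpace ℝ (Fin n)))
    (Q : EuclideanSpace ℝ (Fin m) →₀ ExteriorAlgebra ℝ (EuclideanSpace ℝ (Fin m)))
    (h : cwedge n m P Q = 0) :
    P = 0 ∨ Q = 0 := by
  by_contra! hPQ
  obtain ⟨p, hp⟩ := Finsupp.ne_iff.mp hPQ.1
  obtain ⟨q, hq⟩ := Finsupp.ne_iff.mp hPQ.2
  have hpq : cwedge n m P Q (p, q) = 0 := by rw [h, Finsupp.zero_apply]
  rw [cwedge_apply] at hpq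
  exact (ExteriorAlgebra.eq_zero_or_eq_zero_of_map_inl_mul_map_inr_eq_zero hpq).elim hp hq

end
end
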